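/- The map sending a virtual polytope (m_σ + σ^∨)_{σ∈Σ} to (m_ρ(ρ_N))_{ρ∈Σ₁} ∈ ℤ^{Σ₁} is a well-defined injective group homomorphism from the group of virtual polytopes over a full fan Σ to ℤ^{Σ₁}. -/

import Mathlib

open scoped Classical

/-- `σ` is an `N`-polycone: the set of nonnegative real combinations of a
finite subset of the lattice `N`. -/
def IsPolycone {V : Type*} [AddCommGroup V] [Module ℝ V] (N : AddSubgroup V)
    (σ : Set V) : Prop :=
  ∃ s : Finset V, (↑s : Set V) ⊆ (N : Set V) ∧
    σ = {x | ∃ c : V → ℝ, (∀ v, 0 ≤ c v) ∧ x = ∑ v ∈ s, c v • v}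

/-- The dual cone `E^∨ = {u ∈ V* | u(E) ⊆ ℝ≥0}`. -/
def dualCone {V : Type*} [AddCommGroup V] [Module ℝ V] (E : Set V) :
    Set (Module.Dual ℝ V) :=
  {u | ∀ x ∈ E, 0 ≤ u x}

/-- The dual lattice `M = N*`: functionals taking integer values on `N`. -/
def dualLattice {V : Type*} [AddCommGroup V] [Module ℝ V] (N : AddSubgroup V) :
    Set (Module.Dual ℝ V) :=
  {u | ∀ x ∈ N, ∃ k : ℤ, u x = (k : ℝ)}

/-- `τ` is a face of `σ`: `τ = σ ∩ ker u` for some `u ∈ σ^∨ ∩ M`. -/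
def IsFace {V : Type*} [AddCommGroup V] [Module ℝ V] (N : AddSubgroup V)
    (σ τ : Set V) : Prop :=
  ∃ u ∈ dualCone σ ∩ dualLattice N, τ = σ ∩ {x | u x = 0}

/-- `σ` is sharp: it contains no line. -/
def Sharp {V : Type*} [AddCommGroup V] [Module ℝ V] (σ : Set V) : Prop :=
  ∀ x ∈ σ, -x ∈ σ → x = 0

/-- `N` is a ℤ-structure on `V`: a full-rank lattice. -/
def IsZStructure {V : Type*} [AddCommGroup V] [Module ℝ V] (N : AddSubgroup V) : Prop :=
  Submodule.span ℝ (N : Set V) = ⊤ ∧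
    Nonempty (Module.Basis (Fin (Module.finrank ℝ V)) ℤ N)

/-- An `N`-fan: a finite set of sharp `N`-polycones closed under faces, such
that the intersection of two cones is a common face of both. -/
def IsFan {V : Type*} [AddCommGroup V] [Module ℝ V] (N : AddSubgroup V)
    (F : Set (Set V)) : Prop :=
  F.Finite ∧ (∀ σ ∈ F, IsPolycone N σ ∧ Sharp σ) ∧
    (∀ σ ∈ F, ∀ τ, IsFace N σ τ → τ ∈ F) ∧
    (∀ σ ∈ F, ∀ τ ∈ F, IsFace N σ (σ ∩ τ) ∧ IsFace N τ (σ ∩ τ))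

/-- `ρ` is one-dimensional. -/
def IsRay {V : Type*} [AddCommGroup V] [Module ℝ V] (ρ : Set V) : Prop :=
  Module.finrank ℝ (Submodule.span ℝ ρ) = 1

/-- `x` is the minimal `N`-generator of the ray `ρ`. -/
def IsMinGen {V : Type*} [AddCommGroup V] [Module ℝ V] (N : AddSubgroup V)
    (ρ : Set V) (x : V) : Prop :=
  x ∈ N ∧ ρ = {y | ∃ r : ℝ, 0 ≤ r ∧ y = r • x} ∧
    ∀ r : ℝ, 0 < r → r < 1 → r • x ∉ N

/-! A functional on a sharp rational polycone vanishes as soon as it vanishes on its ray faces: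
each irredundant generator `v` spans a ray face, cut out by a sum over `w ≠ v` of lattice
functionals, each a Farkas certificate for `-w ∉ cone (s ∪ {-v})`, found over `ℚ` in lattice
coordinates and then scaled to be integral. Two translates `m + σ^∨` and `m' + σ^∨` coincide iff
`m - m'` vanishes on `σ`, and compatibility of a virtual polytope along a ray face `ρ ≼ σ` says
`m_σ = m_ρ` on `ρ`, so `m_σ - m'_σ` vanishes on the ray faces of `σ` once `m_ρ(ρ_N) = m'_ρ(ρ_N)`
for all rays. -/

section FinCone

variable {K W ι : Type*}

variable (K) in
def finCone [Semiring K] [PartialOrder K] [AddCommMonoid W] [Module K W]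
    (s : Finset ι) (v : ι → W) : Set W :=
  {x | ∃ c : ι → K, (∀ i, 0 ≤ c i) ∧ x = ∑ i ∈ s, c i • v i}

section OrderedSemiring

variable [Semiring K] [PartialOrder K] [AddCommMonoid W] [Module K W]
  {s t : Finset ι} {v : ι → W} {x y : W}

theorem zero_mem_finCone : (0 : W) ∈ finCone K s v :=
  ⟨0, fun _ => le_rfl, by simp⟩

theorem add_mem_finCone [IsOrderedRing K] (hx : x ∈ finCone K s v) (hy : y ∈ finCone K s v) :
    x + y ∈ finCone K s v := by
  obtain ⟨c, hc, rfl⟩ := hx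
  obtain ⟨d, hd, rfl⟩ := hy
  exact ⟨c + d, fun i => add_nonneg (hc i) (hd i), by simp [add_smul, Finset.sum_add_distrib]⟩

theorem smul_mem_finCone [IsOrderedRing K] {a : K} (ha : 0 ≤ a) (hx : x ∈ finCone K s v) :
    a • x ∈ finCone K s v := by
  obtain ⟨c, hc, rfl⟩ := hx
  exact ⟨a • c, fun i => mul_nonneg ha (hc i), by simp [Finset.smul_sum, smul_smul]⟩

theorem finCone_mono (h : s ⊆ t) : finCone K s v ⊆ finCone K t v := by
  rintro x ⟨c, hc, rfl⟩
  refine ⟨fun i => if i ∈ s then c i else 0, fun i => ?_, ?_⟩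
  · dsimp only
    split_ifs
    exacts [hc i, le_rfl]
  · rw [← Finset.sum_subset h fun i _ hi => by simp [hi]]
    exact Finset.sum_congr rfl fun i hi => by simp [hi]

theorem mem_finCone_of_mem [IsOrderedRing K] {i : ι} (hi : i ∈ s) : v i ∈ finCone K s v :=
  finCone_mono (Finset.singleton_subset_iff.2 hi) ⟨fun _ => 1, fun _ => zero_le_one, by simp⟩

theorem mem_finCone_insert [DecidableEq ι] {a : ι} (ha : a ∉ s) :
    x ∈ finCone K (insert a s) v ↔ ∃ β : K, 0 ≤ β ∧ ∃ y ∈ finCone K s v, x = β • v a + y := by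
  constructor
  · rintro ⟨c, hc, rfl⟩
    exact ⟨c a, hc a, _, ⟨c, hc, rfl⟩, Finset.sum_insert ha⟩
  · rintro ⟨β, hβ, _, ⟨c, hc, rfl⟩, rfl⟩
    refine ⟨Function.update c a β, fun i => ?_, ?_⟩
    · rcases eq_or_ne i a with rfl | h
      · simpa using hβ
      · simpa [h] using hc i
    · rw [Finset.sum_insert ha, Function.update_self]
      congr 1
      exact Finset.sum_congr rfl fun i hi => by
        rw [Function.update_of_ne (ne_of_mem_of_not_mem hi ha)]

theorem apply_nonneg_of_mem_finCone [IsOrderedRing K] (f : W →ₗ[K] K) (hf : ∀ i ∈ s, 0 ≤ f (v i))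
    (hx : x ∈ finCone K s v) : 0 ≤ f x := by
  obtain ⟨c, hc, rfl⟩ := hx
  simpa using Finset.sum_nonneg fun i hi => mul_nonneg (hc i) (hf i hi)

theorem finCone_subset_span : finCone K s v ⊆ Submodule.span K (v '' s) := by
  rintro x ⟨c, -, rfl⟩
  exact Submodule.sum_mem _ fun i hi =>
    Submodule.smul_mem _ _ (Submodule.subset_span (Set.mem_image_of_mem v hi))

theorem finCone_erase_eq [IsOrderedRing K] [DecidableEq ι] {i : ι} (hi : i ∈ s)
    (hred : v i ∈ finCone K (s.erase i) v) : finCone K (s.erase i) v = finCone K s v := by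
  refine (finCone_mono (s.erase_subset i)).antisymm fun x hx => ?_
  rw [← Finset.insert_erase hi, mem_finCone_insert (s.notMem_erase i)] at hx
  obtain ⟨β, hβ, y, hy, rfl⟩ := hx
  exact add_mem_finCone (smul_mem_finCone hβ hred) hy

theorem exists_subset_finCone_eq_irredundant [IsOrderedRing K] [DecidableEq ι]
    (s : Finset ι) (v : ι → W) :
    ∃ t ⊆ s, finCone K t v = finCone K s v ∧ ∀ i ∈ t, v i ∉ finCone K (t.erase i) v := by
  obtain ⟨t, ht, hmin⟩ :=
    (s.powerset.filter fun t => finCone K t v = finCone K s v).exists_min_image Finset.card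
      ⟨s, by simp⟩
  rw [Finset.mem_filter, Finset.mem_powerset] at ht
  refine ⟨t, ht.1, ht.2, fun i hi hred => ?_⟩
  have hle := hmin (t.erase i) (by
    rw [Finset.mem_filter, Finset.mem_powerset, finCone_erase_eq hi hred]
    exact ⟨(t.erase_subset i).trans ht.1, ht.2⟩)
  exact (Finset.card_erase_lt_of_mem hi).not_ge hle

end OrderedSemiring

section LinearOrderedField

variable [Field K] [LinearOrder K] [IsStrictOrderedRing K] [AddCommGroup W] [Module K W]

theorem exists_dual_nonneg_of_notMem_finCone [DecidableEq ι] (s : Finset ι) (v : ι → W) {x : W}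
    (hx : x ∉ finCone K s v) :
    ∃ f : Module.Dual K W, (∀ i ∈ s, 0 ≤ f (v i)) ∧ f x < 0 := by
  induction s using Finset.induction_on generalizing v x with
  | empty =>
    have hx0 : x ≠ 0 := fun h => hx ⟨0, fun _ => le_rfl, by simp [h]⟩
    obtain ⟨φ, hφ⟩ : ∃ φ : Module.Dual K W, φ x ≠ 0 := by
      by_contra! h
      exact hx0 ((Module.forall_dual_apply_eq_zero_iff K x).1 h)
    rcases hφ.lt_or_gt with hneg | hpos
    · exact ⟨φ, by simp, hneg⟩
    · exact ⟨-φ, by simp, by simpa using hpos⟩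
  | insert a t ha IH =>
    obtain ⟨f, hft, hfx⟩ := IH v fun h => hx (finCone_mono (Finset.subset_insert a t) h)
    rcases le_or_gt 0 (f (v a)) with hfa | hfa
    · exact ⟨f, Finset.forall_mem_insert _ _ _ |>.2 ⟨hfa, hft⟩, hfx⟩
    -- project along `v a` onto `ker f`; a certificate for the projected family pulls back
    let P : W →ₗ[K] W := LinearMap.id - (f (v a))⁻¹ • f.smulRight (v a)
    have hP : ∀ y, P y = y - (f y / f (v a)) • v a := fun y => by
      simp [P, div_eq_inv_mul, smul_smul]
    have hPa : P (v a) = 0 := by rw [hP, div_self hfa.ne, one_smul, sub_self]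
    have hPx : P x ∉ finCone K t (P ∘ v) := by
      rintro ⟨c, hc, hcx⟩
      set z := ∑ i ∈ t, c i • v i
      have hz : 0 ≤ f z := apply_nonneg_of_mem_finCone f hft ⟨c, hc, rfl⟩
      have hPxz : P x = P z := by simp [hcx, z, map_sum]
      refine hx ((mem_finCone_insert ha).2 ⟨(f x - f z) / f (v a), ?_, z, ⟨c, hc, rfl⟩, ?_⟩)
      · exact div_nonneg_of_nonpos (by linarith) hfa.le
      · rw [hP, hP, sub_eq_sub_iff_sub_eq_sub] at hPxz
        rw [sub_div, sub_smul, ← hPxz]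
        abel
    obtain ⟨g, hgt, hgx⟩ := IH (P ∘ v) hPx
    refine ⟨g ∘ₗ P, Finset.forall_mem_insert _ _ _ |>.2 ⟨by simp [hPa], hgt⟩, hgx⟩

theorem mem_finCone_singleton_of_apply_eq_zero {s : Finset ι} {v : ι → W} {i : ι} (hi : i ∈ s)
    {U : W →ₗ[K] K} (hUs : ∀ j ∈ s, 0 ≤ U (v j)) (hUpos : ∀ j ∈ s, j ≠ i → 0 < U (v j)) {x : W}
    (hx : x ∈ finCone K s v) (hUx : U x = 0) : x ∈ finCone K {i} v := by
  obtain ⟨c, hc, rfl⟩ := hx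
  have hterms : ∀ j ∈ s, c j * U (v j) = 0 := by
    refine (Finset.sum_eq_zero_iff_of_nonneg fun j hj => mul_nonneg (hc j) (hUs j hj)).1 ?_
    simpa using hUx
  rw [Finset.sum_eq_single_of_mem i hi fun j hj hji => by
    rw [(mul_eq_zero.1 (hterms j hj)).resolve_right (hUpos j hj hji).ne', zero_smul]]
  exact ⟨c, hc, by simp⟩

end LinearOrderedField

end FinCone

theorem exists_nat_pos_mul_eq_int {ι : Type*} [Fintype ι] (a : ι → ℚ) :
    ∃ D : ℕ, 0 < D ∧ ∃ k : ι → ℤ, ∀ i, (D : ℚ) * a i = k i := by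
  refine ⟨∏ i, (a i).den, Finset.prod_pos fun i _ => (a i).den_pos, ?_⟩
  choose m hm using fun i => Finset.dvd_prod_of_mem (fun i => (a i).den) (Finset.mem_univ i)
  refine ⟨fun i => m i * (a i).num, fun i => ?_⟩
  rw [hm i]
  push_cast
  rw [mul_comm ((a i).den : ℚ), mul_assoc, Rat.den_mul_eq_num]

section Lattice

variable {V : Type*} [AddCommGroup V] [Module ℝ V] {N : AddSubgroup V}

theorem IsZStructure.exists_basis (hN : IsZStructure N) :
    ∃ (n : ℕ) (b : Module.Basis (Fin n) ℤ N) (E : Module.Basis (Fin n) ℝ V),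
      ∀ (y : N) i, E.repr y i = b.repr y i := by
  obtain ⟨hspan, ⟨b⟩⟩ := hN
  have hcoe : ∀ y : N, (y : V) = ∑ i, (b.repr y i : ℝ) • (b i : V) := fun y => by
    have h := congrArg Subtype.val (b.sum_repr y)
    push_cast at h
    simpa [Int.cast_smul_eq_zsmul] using h.symm
  have hle : ⊤ ≤ Submodule.span ℝ (Set.range fun i => (b i : V)) := by
    rw [← hspan, Submodule.span_le]
    intro x hx
    rw [show x = ((⟨x, hx⟩ : N) : V) from rfl, hcoe]
    exact Submodule.sum_mem _ fun i _ =>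
      Submodule.smul_mem _ _ (Submodule.subset_span (Set.mem_range_self i))
  let E := basisOfTopLeSpanOfCardEqFinrank (fun i => (b i : V)) hle (by simp)
  refine ⟨_, b, E, fun y i => ?_⟩
  have hE : ∀ i, (b i : V) = E i := fun i => by simp [E]
  simp only [hcoe y, hE, E.repr_sum_self]

theorem exists_dualLattice_nonneg_of_notMem_finCone (hN : IsZStructure N) {s : Finset V}
    (hs : ↑s ⊆ (N : Set V)) {x : V} (hxN : x ∈ N) (hx : x ∉ finCone ℝ s id) :
    ∃ U ∈ dualLattice N, (∀ u ∈ s, 0 ≤ U u) ∧ U x < 0 := by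
  obtain ⟨n, b, E, hE⟩ := hN.exists_basis
  choose z hz using fun y : V => show ∃ z : Fin n → ℤ, y ∈ N → ∀ i, E.repr y i = z i from
    if hy : y ∈ N then ⟨b.repr ⟨y, hy⟩, fun _ i => hE ⟨y, hy⟩ i⟩ else ⟨0, fun h => absurd h hy⟩
  let q : V → Fin n → ℚ := fun y i => z y i
  have hqx : q x ∉ finCone ℚ s q := by
    rintro ⟨c, hc, hcx⟩
    refine hx ⟨fun u => c u, fun u => Rat.cast_nonneg.2 (hc u),
      E.repr.injective (Finsupp.ext fun i => ?_)⟩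
    have hi : (z x i : ℚ) = ∑ u ∈ s, c u * z u i := by simpa [q] using congrFun hcx i
    rw [hz x hxN, map_sum, Finsupp.finsetSum_apply]
    simp only [id, map_smul, Finsupp.smul_apply, smul_eq_mul]
    rw [Finset.sum_congr rfl fun u hu => by rw [hz u (hs hu)]]
    exact_mod_cast hi
  obtain ⟨f, hfs, hfx⟩ := exists_dual_nonneg_of_notMem_finCone s q hqx
  obtain ⟨D, hD, k, hk⟩ := exists_nat_pos_mul_eq_int fun i => f fun j => if i = j then 1 else 0
  let U : Module.Dual ℝ V := ∑ i, (k i : ℝ) • E.coord i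
  have hU : ∀ y ∈ N, U y = ((∑ i, k i * z y i : ℤ) : ℝ) := fun y hy => by
    simp [U, hz y hy]
  have hUf : ∀ y, ((∑ i, k i * z y i : ℤ) : ℚ) = D * f (q y) := fun y => by
    rw [LinearMap.pi_apply_eq_sum_univ f, Finset.mul_sum]
    push_cast
    exact Finset.sum_congr rfl fun i _ => by rw [← hk i, smul_eq_mul]; ring
  have hsign : ∀ y ∈ N, 0 ≤ f (q y) → 0 ≤ U y := fun y hy h => by
    have : (0 : ℚ) ≤ ((∑ i, k i * z y i : ℤ) : ℚ) := by rw [hUf]; positivity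
    rw [hU y hy]
    exact_mod_cast this
  refine ⟨U, fun y hy => ⟨_, hU y hy⟩, fun u hu => hsign u (hs hu) (hfs u hu), ?_⟩
  have : ((∑ i, k i * z x i : ℤ) : ℚ) < 0 := by
    rw [hUf]
    exact mul_neg_of_pos_of_neg (by exact_mod_cast hD) hfx
  rw [hU x hxN]
  exact_mod_cast this

end Lattice

section Polycone

variable {V : Type*} [AddCommGroup V] [Module ℝ V] {N : AddSubgroup V}

theorem sum_mem_dualLattice {ι : Type*} (t : Finset ι) {f : ι → Module.Dual ℝ V}
    (hf : ∀ i ∈ t, f i ∈ dualLattice N) : ∑ i ∈ t, f i ∈ dualLattice N := by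
  induction t using Finset.induction_on with
  | empty => exact fun _ _ => ⟨0, by simp⟩
  | insert a t ha IH =>
    intro x hx
    obtain ⟨k, hk⟩ := hf a (t.mem_insert_self a) x hx
    obtain ⟨l, hl⟩ := IH (fun i hi => hf i (Finset.mem_insert_of_mem hi)) x hx
    exact ⟨k + l, by simp [Finset.sum_insert ha, hk, hl]⟩

theorem isRay_of_subset_finCone_singleton {τ : Set V} {v : V} (hv : v ≠ 0)
    (hτ : τ ⊆ finCone ℝ {v} id) (hvτ : v ∈ τ) : IsRay τ := by
  have hspan : Submodule.span ℝ τ = Submodule.span ℝ {v} := by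
    refine le_antisymm ?_
      (Submodule.span_le.2 (Set.singleton_subset_iff.2 (Submodule.subset_span hvτ)))
    refine Submodule.span_le.2 (hτ.trans ?_)
    simpa using finCone_subset_span (K := ℝ) (s := {v}) (v := id)
  rw [IsRay, hspan, finrank_span_singleton hv]

variable {s : Finset V}

theorem exists_dualLattice_exposing_of_ne (hN : IsZStructure N) (hs : ↑s ⊆ (N : Set V))
    (hsharp : Sharp (finCone ℝ s id)) (hirr : ∀ u ∈ s, u ∉ finCone ℝ (s.erase u) id)
    {v w : V} (hv : v ∈ s) (hw : w ∈ s) (hwv : w ≠ v) :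
    ∃ U ∈ dualLattice N, (∀ u ∈ s, 0 ≤ U u) ∧ U v = 0 ∧ 0 < U w := by
  have hne : ∀ u ∈ s, u ≠ 0 := fun u hu h => hirr u hu (h ▸ zero_mem_finCone)
  have hnv : -v ∉ s := fun h =>
    hne v hv (hsharp v (mem_finCone_of_mem hv) (mem_finCone_of_mem (v := id) h))
  -- a Farkas certificate for this is `≥ 0` on `±v` and on `s`, and `> 0` at `w`
  have hcone : -w ∉ finCone ℝ (insert (-v) s) id := by
    rw [mem_finCone_insert hnv]
    rintro ⟨β, -, y, hy, hwy⟩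
    rw [← Finset.insert_erase hv, mem_finCone_insert (s.notMem_erase v)] at hy
    obtain ⟨γ, -, y', hy', rfl⟩ := hy
    have hz : w + y' ∈ finCone ℝ (s.erase v) id :=
      add_mem_finCone (mem_finCone_of_mem (v := id) (Finset.mem_erase.2 ⟨hwv, hw⟩)) hy'
    have hzv : w + y' = (β - γ) • v := by
      simp only [id] at hwy
      linear_combination (norm := module) -hwy
    -- a positive multiple makes `v` redundant, a nonpositive one puts a line in the cone
    rcases lt_or_ge 0 (β - γ) with hpos | hnonpos
    · refine hirr v hv ?_
      convert smul_mem_finCone (inv_nonneg.2 hpos.le) hz using 1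
      rw [hzv, inv_smul_smul₀ hpos.ne']
    · have hz0 : w + y' = 0 := hsharp _ (finCone_mono (s.erase_subset v) hz) (by
        rw [hzv, ← neg_smul]
        exact smul_mem_finCone (by linarith) (mem_finCone_of_mem hv))
      refine hne w hw (hsharp w (mem_finCone_of_mem hw) ?_)
      rw [neg_eq_of_add_eq_zero_left (by rwa [add_comm] at hz0)]
      exact finCone_mono (s.erase_subset v) hy'
  obtain ⟨U, hU, hUs, hUw⟩ := exists_dualLattice_nonneg_of_notMem_finCone hN
    (by simpa [Set.insert_subset_iff] using ⟨hs hv, hs⟩) (neg_mem (hs hw)) hcone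
  rw [Finset.forall_mem_insert, map_neg, neg_nonneg] at hUs
  exact ⟨U, hU, hUs.2, hUs.1.antisymm (hUs.2 v hv), by simpa using hUw⟩

theorem exists_dualLattice_exposing (hN : IsZStructure N) (hs : ↑s ⊆ (N : Set V))
    (hsharp : Sharp (finCone ℝ s id)) (hirr : ∀ u ∈ s, u ∉ finCone ℝ (s.erase u) id)
    {v : V} (hv : v ∈ s) :
    ∃ U ∈ dualLattice N, (∀ u ∈ s, 0 ≤ U u) ∧ U v = 0 ∧ ∀ w ∈ s, w ≠ v → 0 < U w := by
  choose! U hU using fun w (hw : w ∈ s.erase v) =>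
    exists_dualLattice_exposing_of_ne hN hs hsharp hirr hv (s.mem_of_mem_erase hw)
      (s.ne_of_mem_erase hw)
  refine ⟨∑ w ∈ s.erase v, U w, sum_mem_dualLattice _ fun w hw => (hU w hw).1, fun u hu => ?_,
    ?_, fun w hw hwv => ?_⟩ <;> simp only [LinearMap.sum_apply]
  · exact Finset.sum_nonneg fun w' hw' => (hU w' hw').2.1 u hu
  · exact Finset.sum_eq_zero fun w' hw' => (hU w' hw').2.2.1
  · exact Finset.sum_pos' (fun w' hw' => (hU w' hw').2.1 w hw)
      ⟨w, Finset.mem_erase.2 ⟨hwv, hw⟩, (hU w (Finset.mem_erase.2 ⟨hwv, hw⟩)).2.2.2⟩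

theorem IsPolycone.apply_eq_zero_of_forall_isRay_face (hN : IsZStructure N) {σ : Set V}
    (hσ : IsPolycone N σ) (hsharp : Sharp σ) {d : Module.Dual ℝ V}
    (hd : ∀ τ, IsFace N σ τ → IsRay τ → ∀ x ∈ τ, d x = 0) : ∀ x ∈ σ, d x = 0 := by
  obtain ⟨s₀, hs₀, hσ⟩ := hσ
  obtain ⟨s, hss₀, hs, hirr⟩ := exists_subset_finCone_eq_irredundant (K := ℝ) s₀ id
  obtain rfl : σ = finCone ℝ s id := hσ.trans hs.symm
  have hsN : ↑s ⊆ (N : Set V) := (Finset.coe_subset.2 hss₀).trans hs₀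
  have hne : ∀ v ∈ s, v ≠ 0 := fun v hv h => hirr v hv (h ▸ zero_mem_finCone)
  have hgen : ∀ v ∈ s, d v = 0 := fun v hv => by
    obtain ⟨U, hU, hUs, hUv, hUpos⟩ := exists_dualLattice_exposing hN hsN hsharp hirr hv
    refine hd _ ⟨U, ⟨fun x hx => apply_nonneg_of_mem_finCone U hUs hx, hU⟩, rfl⟩
      (isRay_of_subset_finCone_singleton (hne v hv)
        (fun x hx => mem_finCone_singleton_of_apply_eq_zero hv hUs hUpos hx.1 hx.2)
        ⟨mem_finCone_of_mem hv, hUv⟩) v ⟨mem_finCone_of_mem hv, hUv⟩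
  rintro x ⟨c, -, rfl⟩
  simp only [id, map_sum, map_smul, smul_eq_mul]
  exact Finset.sum_eq_zero fun v hv => by rw [hgen v hv, mul_zero]

theorem image_add_dualCone_eq_iff {σ : Set V} {m m' : Module.Dual ℝ V} :
    (fun u => m + u) '' dualCone σ = (fun u => m' + u) '' dualCone σ ↔ Set.EqOn m m' σ := by
  have hsubset : ∀ f g : Module.Dual ℝ V, Set.EqOn f g σ →
      (fun u => f + u) '' dualCone σ ⊆ (fun u => g + u) '' dualCone σ := by
    rintro f g h _ ⟨u, hu, rfl⟩
    exact ⟨f - g + u, fun x hx => by simpa [h hx] using hu x hx, by dsimp only; abel⟩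
  refine ⟨fun h x hx => ?_, fun h => (hsubset m m' h).antisymm (hsubset m' m h.symm)⟩
  have h0 : (0 : Module.Dual ℝ V) ∈ dualCone σ := fun _ _ => le_rfl
  obtain ⟨u, hu, hmu⟩ : m ∈ (fun u => m' + u) '' dualCone σ := h ▸ ⟨0, h0, add_zero m⟩
  obtain ⟨u', hu', hmu'⟩ : m' ∈ (fun u => m + u) '' dualCone σ := h ▸ ⟨0, h0, add_zero m'⟩
  have e := congrArg (· x) hmu
  have e' := congrArg (· x) hmu'
  simp only [LinearMap.add_apply] at e e'
  linarith [hu x hx, hu' x hx]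

theorem IsMinGen.mem {ρ : Set V} {g : V} (hg : IsMinGen N ρ g) : g ∈ ρ :=
  hg.2.1 ▸ ⟨1, zero_le_one, (one_smul ℝ g).symm⟩

theorem IsMinGen.eqOn_of_apply_eq {ρ : Set V} {g : V} (hg : IsMinGen N ρ g)
    {f f' : Module.Dual ℝ V} (h : f g = f' g) : Set.EqOn f f' ρ := by
  rw [hg.2.1]
  rintro _ ⟨t, -, rfl⟩
  simp [h]

end Polycone

theorem virtualPolytope_embedding_general {V : Type*} [AddCommGroup V] [Module ℝ V]
    (N : AddSubgroup V) (hN : IsZStructure N)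
    (F : Set (Set V)) (hF : IsFan N F)
    {ι : Type*} (r : ι → Set V)
    (hray : ∀ ρ, r ρ ∈ F ∧ IsRay (r ρ))
    (hsurj : ∀ ρ' ∈ F, IsRay ρ' → ∃ ρ, r ρ = ρ')
    (gen : Set V → V) (hgen : ∀ ρ ∈ F, IsRay ρ → IsMinGen N ρ (gen ρ))
    (m m' : Set V → Module.Dual ℝ V)
    (hm : ∀ σ ∈ F, m σ ∈ dualLattice N)
    (hvp : ∀ σ ∈ F, ∀ τ ∈ F, IsFace N σ τ → ∀ x ∈ τ, (m σ - m τ) x = 0)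
    (hvp' : ∀ σ ∈ F, ∀ τ ∈ F, IsFace N σ τ → ∀ x ∈ τ, (m' σ - m' τ) x = 0) :
    (∀ ρ : ι, ∃ k : ℤ, m (r ρ) (gen (r ρ)) = (k : ℝ)) ∧
    (∀ ρ : ι, (m (r ρ) + m' (r ρ)) (gen (r ρ)) =
        m (r ρ) (gen (r ρ)) + m' (r ρ) (gen (r ρ))) ∧
    ((∀ σ ∈ F, (fun u => m σ + u) '' dualCone σ =
        (fun u => m' σ + u) '' dualCone σ) ↔
      ∀ ρ : ι, m (r ρ) (gen (r ρ)) = m' (r ρ) (gen (r ρ))) := by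
  refine ⟨fun ρ => hm _ (hray ρ).1 _ (hgen _ (hray ρ).1 (hray ρ).2).1,
    fun ρ => LinearMap.add_apply _ _ _, fun h ρ => ?_, fun h σ hσ => ?_⟩
  · exact image_add_dualCone_eq_iff.1 (h _ (hray ρ).1) (hgen _ (hray ρ).1 (hray ρ).2).mem
  obtain ⟨hpoly, hsharp⟩ := hF.2.1 σ hσ
  refine image_add_dualCone_eq_iff.2 fun x hx => sub_eq_zero.1 ?_
  refine hpoly.apply_eq_zero_of_forall_isRay_face hN hsharp (d := m σ - m' σ)
    (fun τ hτ hτray y hy => ?_) x hx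
  have hτF := hF.2.2.1 σ hσ τ hτ
  obtain ⟨ρ, rfl⟩ := hsurj τ hτF hτray
  have hρ := (hgen _ hτF hτray).eqOn_of_apply_eq (h ρ) hy
  have h1 := hvp σ hσ _ hτF hτ y hy
  have h2 := hvp' σ hσ _ hτF hτ y hy
  simp only [LinearMap.sub_apply] at h1 h2 ⊢
  linarith

/-- the map sending a virtual polytope `(m_σ + σ^∨)_σ` over a
full fan to `(m_ρ(ρ_N))_{ρ ∈ Σ₁} ∈ ℤ^{Σ₁}` is a well-defined injective group
homomorphism: its values are integers, it is additive in the representatives,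
and two virtual polytopes coincide (as families of subsets of `V*`) iff their
images coincide. -/
theorem virtualPolytope_embedding {V : Type*} [AddCommGroup V] [Module ℝ V]
    [FiniteDimensional ℝ V] (N : AddSubgroup V) (hN : IsZStructure N)
    (F : Set (Set V)) (hF : IsFan N F) (hfull : Submodule.span ℝ (⋃₀ F) = ⊤)
    {ι : Type*} [Fintype ι] (r : ι → Set V) (hrinj : Function.Injective r)
    (hray : ∀ ρ, r ρ ∈ F ∧ IsRay (r ρ))
    (hsurj : ∀ ρ' ∈ F, IsRay ρ' → ∃ ρ, r ρ = ρ')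
    (gen : Set V → V) (hgen : ∀ ρ ∈ F, IsRay ρ → IsMinGen N ρ (gen ρ))
    (m m' : Set V → Module.Dual ℝ V)
    (hm : ∀ σ ∈ F, m σ ∈ dualLattice N) (hm' : ∀ σ ∈ F, m' σ ∈ dualLattice N)
    (hvp : ∀ σ ∈ F, ∀ τ ∈ F, IsFace N σ τ → ∀ x ∈ τ, (m σ - m τ) x = 0)
    (hvp' : ∀ σ ∈ F, ∀ τ ∈ F, IsFace N σ τ → ∀ x ∈ τ, (m' σ - m' τ) x = 0) :
    (∀ ρ : ι, ∃ k : ℤ, m (r ρ) (gen (r ρ)) = (k : ℝ)) ∧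
    (∀ ρ : ι, (m (r ρ) + m' (r ρ)) (gen (r ρ)) =
        m (r ρ) (gen (r ρ)) + m' (r ρ) (gen (r ρ))) ∧
    ((∀ σ ∈ F, (fun u => m σ + u) '' dualCone σ =
        (fun u => m' σ + u) '' dualCone σ) ↔
      ∀ ρ : ι, m (r ρ) (gen (r ρ)) = m' (r ρ) (gen (r ρ))) :=
  virtualPolytope_embedding_general N hN F hF r hray hsurj gen hgen m m' hm hvp hvp'
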